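/- GL is not strongly complete for its Kripke semantics but is strongly complete for provability models with necessitation and Löb's rule, in the following canonical-model sense: for any set Γ of modal formulas and formula A with Γ ⊬_GL A, define W₀ as the set of maximal consistent sets containing all theorems of GL, w ≺ u iff (□B ∈ w implies B ∈ u), worlds of the model as nonempty finite ≺-increasing sequences σ = ⟨w₀,…,wₙ⟩, σ ⊏ τ iff τ = σ*⟨w⟩ for some w, σ ⊩ p iff p ∈ last(σ), and for τ = σ*⟨w⟩ let T_τ have axioms {B : for all u ≻ last(σ), B ∈ u} and no rules. Then for every formula B and sequence σ: the resulting pre-model satisfies 𝒫, σ ⊩ B iff B ∈ last(σ). -/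

import Mathlib

/-- Formulas of the modal language with atoms, ⊥, → and □. -/
inductive Fml : Type
  | atom : ℕ → Fml
  | bot  : Fml
  | imp  : Fml → Fml → Fml
  | box  : Fml → Fml
deriving DecidableEq

/-- Classical Boolean evaluation where boxed formulas behave like atoms:
the valuation `v` is queried on atoms and on boxed formulas. -/
def evalCL (v : Fml → Bool) : Fml → Bool
  | .atom n => v (.atom n)
  | .bot => false
  | .imp A B => !(evalCL v A) || evalCL v B
  | .box A => v (.box A)

/-- Classical tautology over the modal language (□-formulas act as atoms). -/
def Taut (A : Fml) : Prop := ∀ v, evalCL v A = true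

/-- A formula is purely modal if every atom is in the scope of some □. -/
def PurelyModal : Fml → Prop
  | .atom _ => False
  | .bot => True
  | .imp A B => PurelyModal A ∧ PurelyModal B
  | .box _ => True

/-- A provability pre-model: a frame, a theory (given by its set of
derivable formulas) at each world, and a valuation. -/
structure PModel (W : Type*) where
  R : W → W → Prop
  T : W → Set Fml
  V : W → ℕ → Prop

/-- Forcing in a provability pre-model. -/
def pforce {W : Type*} (P : PModel W) : W → Fml → Prop
  | w, .atom n => P.V w n
  | _, .bot => False
  | w, .imp A B => pforce P w A → pforce P w B
  | w, .box A => ∀ u, P.R w u → A ∈ P.T u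

/-- `𝒫, w ⊩⁺ A` iff some predecessor `u ⊏ w` has `𝒫, v ⊩ A` for all `v ⊐⁺ u`. -/
def pforcePlus {W : Type*} (P : PModel W) (w : W) (A : Fml) : Prop :=
  ∃ u, P.R u w ∧ ∀ v, Relation.TransGen P.R u v → pforce P v A

/-- A world is ⊏-accessible if it has a ⊏-predecessor. -/
def Accessible {W : Type*} (P : PModel W) (w : W) : Prop := ∃ v, P.R v w

/-- A classical theory: contains all classical tautologies and is closed
under modus ponens. -/
def IsClassicalTheory (T : Set Fml) : Prop :=
  (∀ A, Taut A → A ∈ T) ∧ (∀ A B, Fml.imp A B ∈ T → A ∈ T → B ∈ T)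

/-- Provability model: classical theories at accessible worlds and modal
completeness. -/
def IsPModel {W : Type*} (P : PModel W) : Prop :=
  (∀ w, Accessible P w → IsClassicalTheory (P.T w)) ∧
  (∀ w A, PurelyModal A → pforcePlus P w A → A ∈ P.T w)

/-- A Kripke model. -/
structure KModel (W : Type*) where
  R : W → W → Prop
  V : W → ℕ → Prop

/-- Kripke forcing. -/
def kforce {W : Type*} (K : KModel W) : W → Fml → Prop
  | w, .atom n => K.V w n
  | _, .bot => False
  | w, .imp A B => kforce K w A → kforce K w B
  | w, .box A => ∀ u, K.R w u → kforce K u A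

/-- The provability logic GL: classical tautologies, K, 4, Löb's axiom,
modus ponens and necessitation. -/
inductive GLprf : Fml → Prop
  | taut {A} : Taut A → GLprf A
  | k (A B : Fml) : GLprf (.imp (.box (.imp A B)) (.imp (.box A) (.box B)))
  | four (A : Fml) : GLprf (.imp (.box A) (.box (.box A)))
  | lob (A : Fml) : GLprf (.imp (.box (.imp (.box A) A)) (.box A))
  | mp {A B} : GLprf (.imp A B) → GLprf A → GLprf B
  | nec {A} : GLprf A → GLprf (.box A)

/-- A maximal consistent set containing all theorems of GL: it contains GL,
is closed under modus ponens, is consistent, and is complete. -/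
def MCS (w : Set Fml) : Prop :=
  (∀ A, GLprf A → A ∈ w) ∧
  (∀ A B, Fml.imp A B ∈ w → A ∈ w → B ∈ w) ∧
  Fml.bot ∉ w ∧
  (∀ A, A ∈ w ∨ Fml.imp A Fml.bot ∈ w)

/-- `w ≺ u` iff `□B ∈ w` implies `B ∈ u`. -/
def prec (w u : Set Fml) : Prop := ∀ A, Fml.box A ∈ w → A ∈ u

/-- Local derivability from a set `Γ` over GL (theorems of GL plus `Γ`,
closed under modus ponens). -/
inductive GLfrom (Γ : Set Fml) : Fml → Prop
  | ax {A} : A ∈ Γ → GLfrom Γ A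
  | thm {A} : GLprf A → GLfrom Γ A
  | mp {A B} : GLfrom Γ (.imp A B) → GLfrom Γ A → GLfrom Γ B

/-- The final element of a sequence of maximal consistent sets. -/
def fel (σ : List (Set Fml)) : Set Fml := σ.getLastD ∅

/-- Worlds of the canonical model: nonempty finite ≺-increasing sequences of
maximal consistent sets. -/
def IsWorldGL (σ : List (Set Fml)) : Prop :=
  σ ≠ [] ∧ (∀ w ∈ σ, MCS w) ∧ List.Chain' prec σ

/-- The canonical provability pre-model for the strong completeness of GL:
`σ ⊏ τ` iff `τ = σ*⟨w⟩`, atoms read off the final element, and the theory of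
`τ = σ*⟨w⟩` has axioms `{B : ∀ u ≻ last(σ), B ∈ u}` and no rules. -/
def canGL : PModel (List (Set Fml)) where
  R σ τ := IsWorldGL σ ∧ IsWorldGL τ ∧ ∃ w, τ = σ ++ [w]
  T τ := {B | ∀ u, MCS u → prec (fel τ.dropLast) u → B ∈ u}
  V σ n := Fml.atom n ∈ fel σ


section Aux

/-- Consistency. -/
def Consist (X : Set Fml) : Prop := ¬ GLfrom X Fml.bot

lemma GLfrom_mono {X Y : Set Fml} (h : X ⊆ Y) {B} (hB : GLfrom X B) : GLfrom Y B := by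
  induction hB with
  | ax hA => exact .ax (h hA)
  | thm hA => exact .thm hA
  | mp _ _ ih1 ih2 => exact .mp ih1 ih2

lemma taut_id (A : Fml) : Taut (A.imp A) := by
  intro v; simp only [evalCL]; cases evalCL v A <;> rfl

lemma taut_k1 (A B : Fml) : Taut (B.imp (A.imp B)) := by
  intro v; simp only [evalCL]; cases evalCL v A <;> cases evalCL v B <;> rfl

lemma taut_s (A B C : Fml) :
    Taut ((A.imp (B.imp C)).imp ((A.imp B).imp (A.imp C))) := by
  intro v; simp only [evalCL]
  cases evalCL v A <;> cases evalCL v B <;> cases evalCL v C <;> rfl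

lemma taut_dne (B : Fml) : Taut (((B.imp .bot).imp .bot).imp B) := by
  intro v; simp only [evalCL]; cases evalCL v B <;> rfl

lemma taut_contra (A B : Fml) : Taut ((A.imp .bot).imp (A.imp B)) := by
  intro v; simp only [evalCL]; cases evalCL v A <;> cases evalCL v B <;> rfl

/-- Deduction theorem for `GLfrom`. -/
lemma deduction {X : Set Fml} {A B : Fml} (h : GLfrom (insert A X) B) :
    GLfrom X (A.imp B) := by
  induction h with
  | @ax C hC =>
    rcases hC with rfl | hC
    · exact .thm (.taut (taut_id C))
    · exact .mp (.thm (.taut (taut_k1 A C))) (.ax hC)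
  | @thm C hC => exact .mp (.thm (.taut (taut_k1 A C))) (.thm hC)
  | @mp C D _ _ ih1 ih2 => exact .mp (.mp (.thm (.taut (taut_s A C D))) ih1) ih2

lemma GLfrom_finset {X : Set Fml} {B} (h : GLfrom X B) :
    ∃ S : Finset Fml, ↑S ⊆ X ∧ GLfrom ↑S B := by
  classical
  induction h with
  | @ax C hC => exact ⟨{C}, by simpa using hC, .ax (by simp)⟩
  | @thm C hC => exact ⟨∅, by simp, .thm hC⟩
  | mp _ _ ih1 ih2 =>
    obtain ⟨S1, hS1, d1⟩ := ih1
    obtain ⟨S2, hS2, d2⟩ := ih2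
    refine ⟨S1 ∪ S2, ?_, .mp (GLfrom_mono ?_ d1) (GLfrom_mono ?_ d2)⟩
    · push_cast; exact Set.union_subset hS1 hS2
    · push_cast; exact Set.subset_union_left
    · push_cast; exact Set.subset_union_right

lemma finset_subset_chain {c : Set (Set Fml)} (hc : IsChain (· ⊆ ·) c)
    (hne : c.Nonempty) (S : Finset Fml) (hS : ↑S ⊆ ⋃₀ c) :
    ∃ t ∈ c, ↑S ⊆ t := by
  classical
  induction S using Finset.induction_on with
  | empty => exact ⟨hne.choose, hne.choose_spec, by simp⟩
  | @insert a S ha ih =>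
    have haU : a ∈ ⋃₀ c := hS (by simp)
    obtain ⟨t1, ht1, hat1⟩ := haU
    obtain ⟨t2, ht2, hSt2⟩ := ih (by
      refine Set.Subset.trans ?_ hS
      intro x hx; simp at hx ⊢; tauto)
    rcases eq_or_ne t1 t2 with rfl | hne'
    · exact ⟨t1, ht1, by push_cast; exact Set.insert_subset hat1 hSt2⟩
    · rcases hc ht1 ht2 hne' with h12 | h21
      · exact ⟨t2, ht2, by push_cast; exact Set.insert_subset (h12 hat1) hSt2⟩
      · refine ⟨t1, ht1, ?_⟩
        push_cast
        exact Set.insert_subset hat1 (hSt2.trans h21)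

lemma lindenbaum {X : Set Fml} (hX : Consist X) : ∃ M, X ⊆ M ∧ MCS M := by
  obtain ⟨M, hXM, hMS, hmax⟩ := zorn_subset_nonempty {Y | Consist Y} (fun c hc hchain hne => by
      refine ⟨⋃₀ c, ?_, fun s hs => Set.subset_sUnion_of_mem hs⟩
      intro habs
      obtain ⟨S, hSsub, hSd⟩ := GLfrom_finset habs
      obtain ⟨t, htc, hSt⟩ := finset_subset_chain hchain hne S hSsub
      exact (hc htc) (GLfrom_mono hSt hSd)) X hX
  have hkey : ∀ A : Fml, Consist (insert A M) → A ∈ M := by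
    intro A hA
    have := hmax hA (Set.subset_insert A M)
    exact this (Set.mem_insert A M)
  have hnot : ∀ A : Fml, A ∉ M → GLfrom M (A.imp .bot) := by
    intro A hA
    by_contra hd
    refine hA (hkey A fun habs => hd (deduction habs))
  refine ⟨M, hXM, ?_, ?_, ?_, ?_⟩
  · intro A hA
    refine hkey A fun habs => hMS (.mp (deduction habs) (.thm hA))
  · intro A B hAB hA
    refine hkey B fun habs => hMS (.mp (deduction habs) (.mp (.ax hAB) (.ax hA)))
  · exact fun habs => hMS (.ax habs)
  · intro A
    by_contra hcon
    push_neg at hcon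
    exact hMS (.mp (hnot _ hcon.2) (hnot _ hcon.1))

lemma box_from {w : Set Fml} (hw : MCS w) {D}
    (h : GLfrom {C | Fml.box C ∈ w} D) : Fml.box D ∈ w := by
  induction h with
  | ax hA => exact hA
  | thm hA => exact hw.1 _ (.nec hA)
  | @mp C D _ _ ih1 ih2 =>
    exact hw.2.1 _ _ (hw.2.1 _ _ (hw.1 _ (.k C D)) ih1) ih2

lemma existence {w : Set Fml} (hw : MCS w) {B} (hB : Fml.box B ∉ w) :
    ∃ u, MCS u ∧ prec w u ∧ B ∉ u := by
  have hcon : Consist (insert (B.imp .bot) (insert (Fml.box B) {C | Fml.box C ∈ w})) := by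
    intro habs
    have h2 : GLfrom (insert (Fml.box B) {C | Fml.box C ∈ w}) B :=
      .mp (.thm (.taut (taut_dne B))) (deduction habs)
    have h4 : Fml.box ((Fml.box B).imp B) ∈ w := box_from hw (deduction h2)
    exact hB (hw.2.1 _ _ (hw.1 _ (.lob B)) h4)
  obtain ⟨u, hsub, hu⟩ := lindenbaum hcon
  refine ⟨u, hu, fun C hC => hsub (Set.mem_insert_of_mem _ (Set.mem_insert_of_mem _ hC)),
    fun hBu => ?_⟩
  exact hu.2.2.1 (hu.2.1 _ _ (hsub (Set.mem_insert _ _)) hBu)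

lemma mcs_box_iff {w : Set Fml} (hw : MCS w) (B : Fml) :
    Fml.box B ∈ w ↔ ∀ u, MCS u → prec w u → B ∈ u := by
  constructor
  · exact fun h u _ hp => hp _ h
  · intro h
    by_contra hB
    obtain ⟨u, hu, hp, hBu⟩ := existence hw hB
    exact hBu (h u hu hp)

lemma mcs_imp_iff {w : Set Fml} (hw : MCS w) (A B : Fml) :
    Fml.imp A B ∈ w ↔ (A ∈ w → B ∈ w) := by
  constructor
  · exact fun h hA => hw.2.1 _ _ h hA
  · intro h
    rcases hw.2.2.2 A with hA | hA
    · exact hw.2.1 _ _ (hw.1 _ (.taut (taut_k1 A B))) (h hA)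
    · exact hw.2.1 _ _ (hw.1 _ (.taut (taut_contra A B))) hA

lemma world_decomp {σ : List (Set Fml)} (hσ : IsWorldGL σ) :
    ∃ l w, σ = l ++ [w] := by
  rcases List.eq_nil_or_concat σ with rfl | ⟨l, w, h⟩
  · exact absurd rfl hσ.1
  · exact ⟨l, w, by simpa using h⟩

lemma fel_concat (l : List (Set Fml)) (w : Set Fml) : fel (l ++ [w]) = w :=
  List.getLastD_concat

lemma mcs_fel {σ : List (Set Fml)} (hσ : IsWorldGL σ) : MCS (fel σ) := by
  obtain ⟨l, w, rfl⟩ := world_decomp hσ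
  rw [fel_concat]
  exact hσ.2.1 w (by simp)

lemma world_extend {σ : List (Set Fml)} (hσ : IsWorldGL σ) {u : Set Fml}
    (hu : MCS u) (hp : prec (fel σ) u) : IsWorldGL (σ ++ [u]) := by
  obtain ⟨l, w, rfl⟩ := world_decomp hσ
  rw [fel_concat] at hp
  refine ⟨by simp, ?_, ?_⟩
  · intro v hv
    rcases List.mem_append.1 hv with hv | hv
    · exact hσ.2.1 v hv
    · simp at hv; subst hv; exact hu
  · refine List.isChain_append.2 ⟨hσ.2.2, List.isChain_singleton u, ?_⟩
    intro x hx y hy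
    rw [List.getLast?_concat] at hx
    simp at hx hy; subst hx; subst hy; exact hp

end Aux

/-- Truth lemma for the canonical model witnessing strong completeness of GL
for provability models: given `Γ ⊬_GL A`, for every formula `B` and every
world `σ` of the canonical pre-model, `𝒫, σ ⊩ B` iff `B ∈ last(σ)`. -/
theorem GL_strong_completeness_truth_lemma (Γ : Set Fml) (A : Fml)
    (h : ¬ GLfrom Γ A) :
    ∀ (B : Fml) (σ : List (Set Fml)), IsWorldGL σ →
      (pforce canGL σ B ↔ B ∈ fel σ) := by
  intro B
  induction B with
  | atom n => intro σ hσ; exact Iff.rfl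
  | bot =>
    intro σ hσ
    constructor
    · exact fun h => h.elim
    · exact fun h => (mcs_fel hσ).2.2.1 h
  | imp C D ihC ihD =>
    intro σ hσ
    show (pforce canGL σ C → pforce canGL σ D) ↔ _
    rw [ihC σ hσ, ihD σ hσ, mcs_imp_iff (mcs_fel hσ)]
  | box C ih =>
    intro σ hσ
    show (∀ τ, canGL.R σ τ → C ∈ canGL.T τ) ↔ _
    rw [mcs_box_iff (mcs_fel hσ)]
    constructor
    · intro h u hu hp
      have hτ : IsWorldGL (σ ++ [u]) := world_extend hσ hu hp
      have hm : C ∈ canGL.T (σ ++ [u]) := h _ ⟨hσ, hτ, u, rfl⟩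
      have hd : (σ ++ [u]).dropLast = σ := List.dropLast_concat
      exact hm u hu (by rw [hd]; exact hp)
    · rintro h τ ⟨_, hτ, w, rfl⟩ u hu hp
      rw [List.dropLast_concat] at hp
      exact h u hu hp
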